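/- Let R be a commutative ℚ-algebra and let t, v be two commuting indeterminates. For every m ≥ 1, the operator Π_{k=1}^{m} (t∂_t + vt - k) applied to the constant 1 in R[t,v] equals Σ_{j=0}^{m} (-1)^{m-j} (m!/j!) (vt)^j. Equivalently, e^{-vt} ∘ (t∂_t - 1)(t∂_t - 2)⋯(t∂_t - m) ∘ e^{vt} applied to 1 equals Σ_{j=0}^{m} (-1)^{m-j} (m!/j!) v^j t^j. -/

import Mathlib

/-- One factor `(t∂_t + vt)` of the conjugated Euler operator, acting on `R[v][t]`
(inner variable `v`, outer variable `t`). -/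
noncomputable def eulerVt {R : Type*} [CommRing R]
    (q : Polynomial (Polynomial R)) : Polynomial (Polynomial R) :=
  Polynomial.X * Polynomial.derivative q + Polynomial.C Polynomial.X * Polynomial.X * q

/-- Successive application of the commuting operators `(t∂_t + vt - k)`, `k = 1,…,m`, to `1`. -/
noncomputable def fallProd {R : Type*} [CommRing R] : ℕ → Polynomial (Polynomial R)
  | 0 => 1
  | k + 1 => eulerVt (fallProd k) - (k + 1 : ℕ) • fallProd k

/-!
Applying `t∂_t + vt` once more to `fallProd m` leaves only `(vt)^(m+1)`: by induction, since
`(t∂_t + vt)(vt)^j = j (vt)^j + (vt)^(j+1)`. Hence `fallProd (m+1) = (vt)^(m+1) - (m+1) fallProd m`,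
which is also the recursion satisfied by the truncated sums `m! Σ_{j ≤ m} (-1)^(m-j) (vt)^j / j!`.
-/

open Polynomial Finset

namespace eulerVt

variable {R : Type*} [CommRing R]

theorem sub (p q : R[X][X]) : eulerVt (p - q) = eulerVt p - eulerVt q := by
  simp only [eulerVt, derivative_sub]
  ring

theorem nsmul (n : ℕ) (p : R[X][X]) : eulerVt (n • p) = n • eulerVt p := by
  rw [eulerVt, eulerVt, map_nsmul, smul_add, mul_smul_comm, mul_smul_comm]

theorem vt_pow (j : ℕ) :
    eulerVt ((C X * X : R[X][X]) ^ j) = j • (C X * X) ^ j + (C X * X) ^ (j + 1) := by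
  cases j with
  | zero => simp [eulerVt]
  | succ i =>
    rw [eulerVt, mul_pow, ← C_pow, derivative_C_mul_X_pow]
    simp only [map_mul, map_natCast, C_pow, nsmul_eq_mul]
    push_cast
    ring

end eulerVt

section

variable {R : Type*} [CommRing R]

theorem eulerVt_fallProd (m : ℕ) : eulerVt (fallProd m : R[X][X]) = (C X * X) ^ (m + 1) := by
  induction m with
  | zero => simp [fallProd, eulerVt]
  | succ m ih =>
    rw [fallProd, eulerVt.sub, eulerVt.nsmul, ih, eulerVt.vt_pow]
    abel

theorem fallProd_succ_eq (m : ℕ) :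
    (fallProd (m + 1) : R[X][X]) = (C X * X) ^ (m + 1) - (m + 1) • fallProd m := by
  rw [fallProd, eulerVt_fallProd]

end

theorem neg_one_pow_mul_factorial_div_succ {m j : ℕ} (hj : j ≤ m) :
    (-1 : ℚ) ^ (m + 1 - j) * (m + 1).factorial / j.factorial =
      -(m + 1 : ℚ) * ((-1) ^ (m - j) * m.factorial / j.factorial) := by
  rw [Nat.sub_add_comm hj, pow_succ, Nat.factorial_succ]
  push_cast
  ring

theorem fallProd_eval_general {R : Type*} [CommRing R] [Algebra ℚ R] (m : ℕ) :
    (fallProd m : Polynomial (Polynomial R)) =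
      ∑ j ∈ Finset.range (m + 1),
        ((-1 : ℚ) ^ (m - j) * (m.factorial : ℚ) / (j.factorial : ℚ)) •
          (Polynomial.C Polynomial.X * Polynomial.X) ^ j := by
  induction m with
  | zero => simp [fallProd]
  | succ m ih =>
    rw [fallProd_succ_eq, ih, sum_range_succ (n := m + 1), Nat.sub_self, pow_zero, one_mul, div_self (by positivity), one_smul, Finset.smul_sum,
      sub_eq_add_neg, add_comm, ← sum_neg_distrib]
    congr 1
    refine sum_congr rfl fun j hj => ?_
    rw [neg_one_pow_mul_factorial_div_succ (Nat.lt_succ_iff.mp (mem_range.mp hj)), mul_smul,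
      neg_smul, ← Nat.cast_smul_eq_nsmul ℚ]
    norm_cast

/-- `Π_{k=1}^m (t∂_t + vt - k)` applied to `1` equals `Σ_{j=0}^m (-1)^{m-j} (m!/j!) (vt)^j`. -/
theorem fallProd_eval {R : Type*} [CommRing R] [Algebra ℚ R] (m : ℕ) (hm : 1 ≤ m) :
    (fallProd m : Polynomial (Polynomial R)) =
      ∑ j ∈ Finset.range (m + 1),
        ((-1 : ℚ) ^ (m - j) * (m.factorial : ℚ) / (j.factorial : ℚ)) •
          (Polynomial.C Polynomial.X * Polynomial.X) ^ j :=
  fallProd_eval_general m
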